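/- arXiv:1904.12775 — 2 statements merged into one kernel-verified Lean document; each statement's English description precedes it below -/
import Mathlib

section
/- If E is a random matrix whose distribution is invariant under the sign-flip group R, and g is injective on every orbit {RE* : R ∈ R} where E* has no zero rows, and E almost surely has no zero rows, then p(E) = |{R ∈ R : g(RE) ≥ g(E)}|/2^n is uniformly distributed on {1/2^n, 2/2^n, ..., 1}. -/
open MeasureTheory Matrix
open scoped ENNReal

instance matrixMeasurableSpace (m k : Type*) : MeasurableSpace (Matrix m k ℝ) :=
  MeasurableSpace.pi

/-- The diagonal sign matrix associated to a sign pattern `s`. -/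
noncomputable def signMat {n : ℕ} (s : Fin n → Bool) : Matrix (Fin n) (Fin n) ℝ :=
  Matrix.diagonal fun i => if s i then (1 : ℝ) else -1

/-! If `h ↦ g (h • x)` is injective on a finite group `G`, the ranks
`#{u | g (h • x) ≤ g (u • h • x)}` of the points `h • x` of the orbit are exactly `1, …, |G|`, each
taken once. Invariance makes every `h • E` distributed like `E`, so summing `P (rank (h • E) = k)`
over `h` gives `|G| · P (rank E = k) = ∫ #{h | rank (h • E) = k} dP = 1`. Row sign flips are the
action of `(ℤˣ)ⁿ`, which is free on matrices without zero rows. -/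

open Finset

section UpperRank

variable {ι α : Type*} [Fintype ι] [LinearOrder α]

def upperRank (V : ι → α) (t : ι) : ℕ := #{u | V t ≤ V u}

theorem upperRank_mem_Icc (V : ι → α) (t : ι) : upperRank V t ∈ Icc 1 (Fintype.card ι) :=
  mem_Icc.2 ⟨card_pos.2 ⟨t, by simp⟩, (card_filter_le _ _).trans_eq card_univ⟩

theorem upperRank_lt_of_lt {V : ι → α} {a b : ι} (h : V a < V b) :
    upperRank V b < upperRank V a := by
  refine card_lt_card <| (ssubset_iff_of_subset fun u hu => ?_).2 ⟨a, by simp, by simpa using h⟩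
  simp only [mem_filter, mem_univ, true_and] at hu ⊢
  exact h.le.trans hu

theorem upperRank_injective {V : ι → α} (hV : Function.Injective V) :
    Function.Injective (upperRank V) := by
  intro a b hab
  by_contra hne
  rcases (hV.ne hne).lt_or_gt with h | h
  · exact (upperRank_lt_of_lt h).ne hab.symm
  · exact (upperRank_lt_of_lt h).ne hab

theorem image_upperRank {V : ι → α} (hV : Function.Injective V) :
    univ.image (upperRank V) = Icc 1 (Fintype.card ι) :=
  eq_of_subset_of_card_le (fun _ hk => by
      obtain ⟨t, -, rfl⟩ := mem_image.1 hk
      exact upperRank_mem_Icc V t)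
    (by simp [card_image_of_injective _ (upperRank_injective hV)])

theorem card_upperRank_eq_one {V : ι → α} (hV : Function.Injective V) {k : ℕ}
    (hk : k ∈ Icc 1 (Fintype.card ι)) : #{t | upperRank V t = k} = 1 := by
  obtain ⟨t, -, rfl⟩ := mem_image.1 ((image_upperRank hV).symm ▸ hk)
  rw [card_eq_one]
  exact ⟨t, by ext u; simp [(upperRank_injective hV).eq_iff]⟩

end UpperRank

section RandomizationRank

variable (G : Type*) {X α : Type*} [Group G] [Fintype G] [MulAction G X] [LinearOrder α]

def randomizationRank (g : X → α) (x : X) : ℕ := #{h : G | g x ≤ g (h • x)}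

variable {G}

theorem randomizationRank_smul (g : X → α) (x : X) (h : G) :
    randomizationRank G g (h • x) = upperRank (fun u : G => g (u • x)) h :=
  card_equiv (Equiv.mulRight h) (by simp [mul_smul])

theorem card_randomizationRank_smul_eq_one {g : X → α} {x : X}
    (hinj : Function.Injective fun h : G => g (h • x)) {k : ℕ} (hk : k ∈ Icc 1 (Fintype.card G)) :
    #{h : G | randomizationRank G g (h • x) = k} = 1 := by
  simp_rw [randomizationRank_smul]
  exact card_upperRank_eq_one hinj hk

variable [MeasurableSpace X] [MeasurableConstSMul G X]

theorem measurable_randomizationRank {g : X → ℝ} (hg : Measurable g) :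
    Measurable (randomizationRank G g) := by
  simp_rw [funext fun x => show randomizationRank G g x = _ from card_filter _ _]
  exact Finset.measurable_sum _ fun h _ =>
    Measurable.ite (measurableSet_le hg (hg.comp (measurable_const_smul h))) measurable_const
      measurable_const

theorem measure_randomizationRank_eq {Ω : Type*} [MeasurableSpace Ω] (P : Measure Ω)
    [IsProbabilityMeasure P] {E : Ω → X} (hE : Measurable E)
    (hinv : ∀ h : G, P.map (fun ω => h • E ω) = P.map E)
    {g : X → ℝ} (hg : Measurable g) (hinj : ∀ᵐ ω ∂P, Function.Injective fun h : G => g (h • E ω))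
    {k : ℕ} (hk : k ∈ Icc 1 (Fintype.card G)) :
    P {ω | randomizationRank G g (E ω) = k} = (Fintype.card G : ℝ≥0∞)⁻¹ := by
  set S := {x | randomizationRank G g x = k}
  have hS : MeasurableSet S := measurable_randomizationRank hg (measurableSet_singleton k)
  have h_smul_E (h : G) : Measurable fun ω => h • E ω := (measurable_const_smul h).comp hE
  have h_each (h : G) : ∫⁻ ω, S.indicator 1 (h • E ω) ∂P = P.map E S := by
    rw [← lintegral_map (measurable_one.indicator hS) (h_smul_E h), hinv,
      lintegral_indicator_one hS]
  have h_total : Fintype.card G * P.map E S = 1 := calc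
    _ = ∑ h : G, ∫⁻ ω, S.indicator 1 (h • E ω) ∂P := by simp [h_each]
    _ = ∫⁻ ω, ∑ h : G, S.indicator 1 (h • E ω) ∂P :=
      (lintegral_finsetSum _ fun h _ => (measurable_one.indicator hS).comp (h_smul_E h)).symm
    _ = ∫⁻ _, 1 ∂P := lintegral_congr_ae <| hinj.mono fun ω hω => by
      simp only [Set.indicator_apply, Pi.one_apply]
      rw [sum_boole]
      simp [S, card_randomizationRank_smul_eq_one hω hk]
    _ = 1 := by simp
  rw [Measure.map_apply hE hS] at h_total
  exact ENNReal.eq_inv_of_mul_eq_one_left (by rwa [mul_comm])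

end RandomizationRank

section RowSigns

variable {n p : ℕ}

def boolEquivIntUnits : Bool ≃ ℤˣ where
  toFun b := if b then 1 else -1
  invFun u := decide (u = 1)
  left_inv b := by cases b <;> decide
  right_inv u := by rcases Int.units_eq_one_or u with rfl | rfl <;> decide

instance : MulAction (Fin n → ℤˣ) (Matrix (Fin n) (Fin p) ℝ) :=
  inferInstanceAs (MulAction (Fin n → ℤˣ) (Fin n → Fin p → ℝ))

theorem rowSign_smul_apply (u : Fin n → ℤˣ) (A : Matrix (Fin n) (Fin p) ℝ) (i : Fin n)
    (j : Fin p) : (u • A) i j = ((u i : ℤ) : ℝ) * A i j := by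
  rw [← zsmul_eq_mul, ← Units.smul_def]
  rfl

instance : MeasurableConstSMul (Fin n → ℤˣ) (Matrix (Fin n) (Fin p) ℝ) where
  measurable_const_smul u := measurable_pi_lambda _ fun i => measurable_pi_lambda _ fun j => by
    simp_rw [rowSign_smul_apply]
    exact measurable_const.mul ((measurable_pi_apply j).comp (measurable_pi_apply i))

theorem signMat_mul_eq_smul (s : Fin n → Bool) (A : Matrix (Fin n) (Fin p) ℝ) :
    signMat s * A = (fun i => boolEquivIntUnits (s i)) • A := by
  ext i j
  rw [rowSign_smul_apply, signMat, diagonal_mul]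
  cases s i <;> simp [boolEquivIntUnits]

theorem injective_smul_of_rows_ne_zero {A : Matrix (Fin n) (Fin p) ℝ}
    (hA : ∀ i, ∃ j, A i j ≠ 0) : Function.Injective fun u : Fin n → ℤˣ => u • A := by
  intro u v huv
  funext i
  obtain ⟨j, hj⟩ := hA i
  have := congr_fun (congr_fun huv i) j
  simp only [rowSign_smul_apply, mul_left_inj' hj, Int.cast_inj] at this
  exact Units.ext this

end RowSigns

/-- If the distribution of E is invariant under the sign-flip group, g is injective on
every orbit {R E* : R} whose representative E* has no zero rows, and E almost surely has
no zero rows, then the randomization p-value `p(E) = |{R : g(RE) ≥ g(E)}| / 2^n` is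
uniformly distributed on {1/2^n, 2/2^n, ..., 1}. -/
theorem randomization_pvalue_uniform
    {Ω : Type*} [MeasurableSpace Ω] (P : Measure Ω) [IsProbabilityMeasure P]
    {n p : ℕ} (E : Ω → Matrix (Fin n) (Fin p) ℝ) (hE : Measurable E)
    (hinv : ∀ s : Fin n → Bool,
      P.map (fun ω => signMat s * E ω) = P.map E)
    (g : Matrix (Fin n) (Fin p) ℝ → ℝ) (hg : Measurable g)
    (hinj : ∀ A : Matrix (Fin n) (Fin p) ℝ, (∀ i, ∃ j, A i j ≠ 0) →
      Set.InjOn g {B | ∃ s : Fin n → Bool, B = signMat s * A})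
    (hrows : ∀ᵐ ω ∂P, ∀ i, ∃ j, E ω i j ≠ 0)
    (pval : Ω → ℝ)
    (hpval : ∀ ω, pval ω =
      ((Finset.univ.filter fun s : Fin n → Bool =>
          g (E ω) ≤ g (signMat s * E ω)).card : ℝ) / 2 ^ n) :
    ∀ k : ℕ, k ∈ Finset.Icc 1 (2 ^ n) → P {ω | pval ω = (k : ℝ) / 2 ^ n} = ((2 ^ n : ℝ≥0∞))⁻¹ := by
  intro k hk
  let σ : (Fin n → Bool) ≃ (Fin n → ℤˣ) := Equiv.piCongrRight fun _ => boolEquivIntUnits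
  have h_sign (s : Fin n → Bool) (A : Matrix (Fin n) (Fin p) ℝ) : signMat s * A = σ s • A :=
    signMat_mul_eq_smul s A
  have h_event : {ω | pval ω = k / 2 ^ n} = {ω | randomizationRank (Fin n → ℤˣ) g (E ω) = k} := by
    ext ω
    show pval ω = k / 2 ^ n ↔ randomizationRank _ g (E ω) = k
    rw [hpval, div_left_inj' (by positivity), Nat.cast_inj]
    exact Eq.congr_left <| card_equiv σ fun s => by
      simp only [mem_filter, mem_univ, true_and, h_sign]
  have h_inv (u : Fin n → ℤˣ) : P.map (fun ω => u • E ω) = P.map E := by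
    simpa [h_sign] using hinv (σ.symm u)
  have h_inj : ∀ᵐ ω ∂P, Function.Injective fun u : Fin n → ℤˣ => g (u • E ω) :=
    hrows.mono fun ω hω u v huv => injective_smul_of_rows_ne_zero hω <|
      hinj (E ω) hω ⟨σ.symm u, by simp [h_sign]⟩ ⟨σ.symm v, by simp [h_sign]⟩ huv
  rw [h_event, measure_randomizationRank_eq P hE h_inv hg h_inj (by simpa using hk)]
  simp
end

section
/- Let λ̂ be a minimizer of ‖ι − Xλ‖₂² over λ ≥ 0, and suppose Xλ̂ ≠ 0 and ι'Xλ̂ > 0. Then λ̂ attains the maximum of ι'Xλ/√(λ'X'Xλ) over {λ ≥ 0 : λ'X'Xλ > 0}; i.e. the nonnegative least squares solution maximizes the one-sided normalized statistic. -/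
open Matrix RealInnerProductSpace

/-!
The minimizer `v = Xλ̂` is the metric projection of `ι` onto the convex cone `K = {Xλ : λ ≥ 0}`,
so `⟪ι - v, w⟫ ≤ 0` for every `w ∈ K`, with equality at `w = v`. Hence `⟪ι, w⟫ ≤ ⟪v, w⟫ ≤ ‖v‖ ‖w‖`
while `⟪ι, v⟫ = ‖v‖²`: every ratio `⟪ι, w⟫ / ‖w‖` is at most `‖v‖`, which is the ratio at `v`.
-/

theorem Convex.real_inner_sub_sub_le_zero_of_isMinOn {E : Type*} [NormedAddCommGroup E]
    [InnerProductSpace ℝ E] {s : Set E} (hs : Convex ℝ s) {y v w : E} (hv : v ∈ s)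
    (hmin : IsMinOn (‖y - ·‖) s v) (hw : w ∈ s) : ⟪y - v, w - v⟫ ≤ 0 :=
  (norm_eq_iInf_iff_real_inner_le_zero hs hv).1 (hmin.iInf_eq hv).symm w hw

namespace PointedCone

variable {E : Type*} [NormedAddCommGroup E] [InnerProductSpace ℝ E] {K : PointedCone ℝ E}
  {y v w : E}

theorem inner_sub_le_zero_of_isMinOn (hv : v ∈ K) (hmin : IsMinOn (‖y - ·‖) K v)
    (hw : w ∈ K) : ⟪y - v, w⟫ ≤ 0 := by
  simpa using K.convex.real_inner_sub_sub_le_zero_of_isMinOn hv hmin (K.add_mem hv hw)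

theorem inner_sub_self_eq_zero_of_isMinOn (hv : v ∈ K) (hmin : IsMinOn (‖y - ·‖) K v) :
    ⟪y - v, v⟫ = 0 := by
  refine le_antisymm (inner_sub_le_zero_of_isMinOn hv hmin hv) ?_
  simpa using K.convex.real_inner_sub_sub_le_zero_of_isMinOn hv hmin K.zero_mem

theorem inner_eq_norm_sq_of_isMinOn (hv : v ∈ K) (hmin : IsMinOn (‖y - ·‖) K v) :
    ⟪y, v⟫ = ‖v‖ ^ 2 := by
  have h := inner_sub_self_eq_zero_of_isMinOn hv hmin
  rw [inner_sub_left, real_inner_self_eq_norm_sq] at h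
  linarith

theorem inner_le_norm_mul_norm_of_isMinOn (hv : v ∈ K) (hmin : IsMinOn (‖y - ·‖) K v)
    (hw : w ∈ K) : ⟪y, w⟫ ≤ ‖v‖ * ‖w‖ :=
  calc ⟪y, w⟫ = ⟪y - v, w⟫ + ⟪v, w⟫ := by rw [inner_sub_left]; ring
    _ ≤ ⟪v, w⟫ := by linarith [inner_sub_le_zero_of_isMinOn hv hmin hw]
    _ ≤ ‖v‖ * ‖w‖ := real_inner_le_norm v w

theorem inner_div_norm_le_of_isMinOn (hv : v ∈ K) (hmin : IsMinOn (‖y - ·‖) K v)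
    (hw : w ∈ K) : ⟪y, w⟫ / ‖w‖ ≤ ⟪y, v⟫ / ‖v‖ := by
  rw [inner_eq_norm_sq_of_isMinOn hv hmin, sq, mul_self_div_self]
  exact div_le_of_le_mul₀ (norm_nonneg w) (norm_nonneg v)
    (inner_le_norm_mul_norm_of_isMinOn hv hmin hw)

end PointedCone

theorem EuclideanSpace.real_inner_toLp_toLp {m : Type*} [Fintype m] (x y : m → ℝ) :
    ⟪WithLp.toLp 2 x, WithLp.toLp 2 y⟫ = x ⬝ᵥ y :=
  dotProduct_comm y x

theorem EuclideanSpace.norm_toLp_eq_sqrt_dotProduct {m : Type*} [Fintype m] (x : m → ℝ) :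
    ‖WithLp.toLp 2 x‖ = √(x ⬝ᵥ x) := by
  rw [norm_eq_sqrt_real_inner, EuclideanSpace.real_inner_toLp_toLp]

namespace Matrix

variable {m k : Type*} [Fintype k]

-- Taken in `EuclideanSpace` so that the ambient norm is the ℓ² norm of least squares.
noncomputable def columnCone (X : Matrix m k ℝ) : PointedCone ℝ (EuclideanSpace ℝ m) :=
  (PointedCone.positive ℝ (k → ℝ)).map
    ((WithLp.linearEquiv 2 ℝ (m → ℝ)).symm.toLinearMap ∘ₗ X.mulVecLin)

theorem toLp_mulVec_mem_columnCone (X : Matrix m k ℝ) {l : k → ℝ} (hl : 0 ≤ l) :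
    WithLp.toLp 2 (X *ᵥ l) ∈ X.columnCone :=
  PointedCone.mem_map.2 ⟨l, hl, rfl⟩

theorem isMinOn_norm_sub_columnCone [Fintype m] (X : Matrix m k ℝ) (y : m → ℝ) (lhat : k → ℝ)
    (hmin : ∀ l : k → ℝ, 0 ≤ l → ∑ i, (y i - (X *ᵥ lhat) i) ^ 2 ≤ ∑ i, (y i - (X *ᵥ l) i) ^ 2) :
    IsMinOn (‖WithLp.toLp 2 y - ·‖) X.columnCone (WithLp.toLp 2 (X *ᵥ lhat)) := by
  rintro _ hw
  obtain ⟨l, hl, rfl⟩ := PointedCone.mem_map.1 hw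
  change ‖_‖ ≤ ‖WithLp.toLp 2 y - WithLp.toLp 2 (X *ᵥ l)‖
  rw [← WithLp.toLp_sub, ← WithLp.toLp_sub, ← sq_le_sq₀ (norm_nonneg _) (norm_nonneg _),
    EuclideanSpace.real_norm_sq_eq, EuclideanSpace.real_norm_sq_eq]
  exact hmin l hl

end Matrix

theorem nnls_maximizes_onesided_statistic_general
    {n p : ℕ} (X : Matrix (Fin n) (Fin p) ℝ)
    (ι : Fin n → ℝ)
    (lhat : Fin p → ℝ) (hlhat : ∀ i, 0 ≤ lhat i)
    (hmin : ∀ l : Fin p → ℝ, (∀ i, 0 ≤ l i) →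
      ∑ i, (ι i - (X *ᵥ lhat) i) ^ 2 ≤ ∑ i, (ι i - (X *ᵥ l) i) ^ 2) :
    ∀ l : Fin p → ℝ, (∀ i, 0 ≤ l i) → 0 < (X *ᵥ l) ⬝ᵥ (X *ᵥ l) →
      (ι ⬝ᵥ (X *ᵥ l)) / Real.sqrt ((X *ᵥ l) ⬝ᵥ (X *ᵥ l)) ≤
      (ι ⬝ᵥ (X *ᵥ lhat)) / Real.sqrt ((X *ᵥ lhat) ⬝ᵥ (X *ᵥ lhat)) := by
  intro l hl _
  have h := PointedCone.inner_div_norm_le_of_isMinOn (X.toLp_mulVec_mem_columnCone hlhat)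
    (X.isMinOn_norm_sub_columnCone ι lhat hmin) (X.toLp_mulVec_mem_columnCone hl)
  rwa [EuclideanSpace.real_inner_toLp_toLp, EuclideanSpace.real_inner_toLp_toLp,
    EuclideanSpace.norm_toLp_eq_sqrt_dotProduct,
    EuclideanSpace.norm_toLp_eq_sqrt_dotProduct] at h

/-- Let λ̂ be a minimizer of ‖ι − Xλ‖₂² over λ ≥ 0, with Xλ̂ ≠ 0 and ι'Xλ̂ > 0.
Assume the existence condition: λ'X'Xλ > 0 for all λ ≥ 0, λ ≠ 0 with ι'Xλ > 0.
Then λ̂ maximizes ι'Xλ/√(λ'X'Xλ) over {λ ≥ 0 : λ'X'Xλ > 0}. -/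
theorem nnls_maximizes_onesided_statistic
    {n p : ℕ} (X : Matrix (Fin n) (Fin p) ℝ)
    (ι : Fin n → ℝ) (hι : ι = fun _ => 1)
    (lhat : Fin p → ℝ) (hlhat : ∀ i, 0 ≤ lhat i)
    (hmin : ∀ l : Fin p → ℝ, (∀ i, 0 ≤ l i) →
      ∑ i, (ι i - (X *ᵥ lhat) i) ^ 2 ≤ ∑ i, (ι i - (X *ᵥ l) i) ^ 2)
    (hXlhat : X *ᵥ lhat ≠ 0) (hnum : 0 < ι ⬝ᵥ (X *ᵥ lhat))
    (hcond : ∀ l : Fin p → ℝ, (∀ i, 0 ≤ l i) → l ≠ 0 → 0 < ι ⬝ᵥ (X *ᵥ l) →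
      0 < (X *ᵥ l) ⬝ᵥ (X *ᵥ l)) :
    ∀ l : Fin p → ℝ, (∀ i, 0 ≤ l i) → 0 < (X *ᵥ l) ⬝ᵥ (X *ᵥ l) →
      (ι ⬝ᵥ (X *ᵥ l)) / Real.sqrt ((X *ᵥ l) ⬝ᵥ (X *ᵥ l)) ≤
      (ι ⬝ᵥ (X *ᵥ lhat)) / Real.sqrt ((X *ᵥ lhat) ⬝ᵥ (X *ᵥ lhat)) :=
  nnls_maximizes_onesided_statistic_general X ι lhat hlhat hmin
end
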